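/- Let F be a finite field with q = 2^e elements, q > 2, u = [[1,0],[1,1]] ∈ SL(2,F), r = [[0,λ],[λ⁻¹,0]] with λ ∈ F*, and x = [[1,0],[t,1]] with t ≠ 0. Write q² − 1 = 2k+1. Then the element b(x) := (u·u^r)^{k+1}·(u^r·x)^{k+1} conjugates u to x (i.e., b(x)⁻¹·u·b(x) = x), and b(x) is congruent modulo U = {[[1,0],[w,1]] : w ∈ F} to the diagonal matrix [[s, 0],[0, s⁻¹]] where s² = t. -/

import Mathlib

/-!
A `2 × 2` matrix `A` over `𝔽_q` with `tr A ^ 2 ≠ 4 det A` has two distinct eigenvalues, each a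
root of a quadratic over `𝔽_q` and hence fixed by the square of the `q`-Frobenius; so its
characteristic polynomial divides `X ^ q² - X` and `A ^ q² = A`. In characteristic 2 this
applies to every matrix of nonzero trace, and since `q² = 2 (k + 1)`, raising `N ^ 2` to the
power `k + 1` gives back `N`. Now `u uʳ = N ^ 2` for `N = u r = !![0, λ; λ⁻¹, λ]` and
`uʳ x = P ^ 2` for `P = !![λ s, λ s⁻¹; s λ⁻¹, 0]`, so `b(x) = N P = diag(s, s⁻¹)`, which
conjugates `u` to `x`.
-/

open Polynomial Matrix

theorem FiniteField.pow_card_sq_eq_self_of_sq_add_mul_add {F K : Type*} [Field F] [Fintype F]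
    [CommRing K] [IsDomain K] [Algebra F K] {α : K} (b c : F)
    (hα : α ^ 2 + algebraMap F K b * α + algebraMap F K c = 0) :
    α ^ Fintype.card F ^ 2 = α := by
  set φ := frobeniusAlgHom F K
  have hpow : α ^ Fintype.card F ^ 2 = φ (φ α) := by
    rw [coe_frobeniusAlgHom, sq, pow_mul]
  have hφα : φ α ^ 2 + algebraMap F K b * φ α + algebraMap F K c = 0 := by
    simpa using congrArg φ hα
  have hroots : (φ α - α) * (φ α + α + algebraMap F K b) = 0 := by
    linear_combination hφα - hα
  rcases mul_eq_zero.mp hroots with h | h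
  · rw [hpow, sub_eq_zero.mp h, sub_eq_zero.mp h]
  · have hconj : φ α = -α - algebraMap F K b := by linear_combination h
    rw [hpow, hconj, map_sub, map_neg, AlgHom.commutes, hconj]
    ring

theorem Matrix.pow_card_sq_eq_self {F : Type*} [Field F] [Fintype F]
    (A : Matrix (Fin 2) (Fin 2) F) (hA : A.trace ^ 2 ≠ 4 * A.det) :
    A ^ Fintype.card F ^ 2 = A := by
  suffices A.charpoly ∣ X ^ Fintype.card F ^ 2 - X by
    obtain ⟨g, hg⟩ := this
    simpa [sub_eq_zero, aeval_self_charpoly] using congrArg (aeval A) hg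
  let ι := algebraMap F (AlgebraicClosure F)
  have hdeg : (A.charpoly.map ι).degree ≠ 0 := by
    rw [degree_map, charpoly_degree_eq_dim]
    simp
  obtain ⟨α, hα⟩ := IsAlgClosed.exists_root _ hdeg
  set β := ι A.trace - α
  have hαroot : α ^ 2 - ι A.trace * α + ι A.det = 0 := by
    simpa [charpoly_fin_two] using hα
  have hβroot : β ^ 2 - ι A.trace * β + ι A.det = 0 := by
    linear_combination hαroot
  have hfactor : A.charpoly.map ι = (X - C α) * (X - C β) := by
    have hdet : ι A.det = α * β := by linear_combination hαroot
    simp only [charpoly_fin_two, Polynomial.map_add, Polynomial.map_sub, Polynomial.map_mul,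
      Polynomial.map_pow, map_X, map_C, hdet, β, C_sub, C_mul]
    ring
  have hαβ : IsUnit (α - β) := by
    refine (pow_ne_zero_iff two_ne_zero).mp ?_ |>.isUnit
    have hdisc : (α - β) ^ 2 = ι (A.trace ^ 2 - 4 * A.det) := by
      simp only [map_sub, map_pow, map_mul, map_ofNat]
      linear_combination 4 * hαroot
    rw [hdisc, map_ne_zero_iff _ ι.injective]
    exact sub_ne_zero.mpr hA
  have hdvd : ∀ γ, γ ^ 2 - ι A.trace * γ + ι A.det = 0 →
      X - C γ ∣ X ^ Fintype.card F ^ 2 - X := by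
    intro γ hγ
    rw [dvd_iff_isRoot, IsRoot, eval_sub, eval_pow, eval_X, sub_eq_zero]
    exact FiniteField.pow_card_sq_eq_self_of_sq_add_mul_add (-A.trace) A.det
      (by rw [map_neg]; linear_combination hγ)
  rw [← map_dvd_map ι ι.injective (charpoly_monic A), hfactor]
  simpa using (isCoprime_X_sub_C_of_isUnit_sub hαβ).mul_dvd (hdvd α hαroot) (hdvd β hβroot)

theorem Matrix.sq_pow_eq_self_of_trace_ne_zero {F : Type*} [Field F] [Fintype F] [CharP F 2]
    {k : ℕ} (hk : Fintype.card F ^ 2 = 2 * (k + 1)) {N : Matrix (Fin 2) (Fin 2) F}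
    (hN : N.trace ≠ 0) : (N ^ 2) ^ (k + 1) = N := by
  have h4 : (4 : F) = 0 := by
    rw [show (4 : F) = 2 * 2 by norm_num, CharTwo.two_eq_zero, zero_mul]
  rw [← pow_mul, ← hk]
  exact N.pow_card_sq_eq_self (by rw [h4, zero_mul]; exact pow_ne_zero 2 hN)

theorem stmt_12_general {F : Type*} [Field F] [Fintype F] (e : ℕ)
    (hF : Fintype.card F = 2 ^ e)
    (k : ℕ) (hk : 2 * k + 1 = Fintype.card F ^ 2 - 1)
    (l t s : F) (hl : l ≠ 0) (ht : t ≠ 0) (hs : s ^ 2 = t)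
    (u r x : Matrix.SpecialLinearGroup (Fin 2) F)
    (hu : (u : Matrix (Fin 2) (Fin 2) F) = !![1, 0; 1, 1])
    (hr : (r : Matrix (Fin 2) (Fin 2) F) = !![0, l; l⁻¹, 0])
    (hx : (x : Matrix (Fin 2) (Fin 2) F) = !![1, 0; t, 1]) :
    ((u * (r⁻¹ * u * r)) ^ (k + 1) * ((r⁻¹ * u * r) * x) ^ (k + 1))⁻¹ * u *
        ((u * (r⁻¹ * u * r)) ^ (k + 1) * ((r⁻¹ * u * r) * x) ^ (k + 1)) = x ∧
      ∃ w : F,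
        (((u * (r⁻¹ * u * r)) ^ (k + 1) * ((r⁻¹ * u * r) * x) ^ (k + 1) :
            Matrix.SpecialLinearGroup (Fin 2) F) : Matrix (Fin 2) (Fin 2) F) =
          !![s, 0; w, s⁻¹] := by
  have : CharP F 2 := charP_of_card_eq_prime_pow hF
  have hs0 : s ≠ 0 := by rintro rfl; simp [← hs] at ht
  subst hs
  have hq : Fintype.card F ^ 2 = 2 * (k + 1) := by
    have : 0 < Fintype.card F ^ 2 := by positivity
    omega
  have hN : ((u * (r⁻¹ * u * r) : SpecialLinearGroup (Fin 2) F) : Matrix (Fin 2) (Fin 2) F)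
      = !![0, l; l⁻¹, l] ^ 2 := by
    simp [hu, hr, sq, CharTwo.neg_eq, hl, add_comm]
  have hP : ((r⁻¹ * u * r * x : SpecialLinearGroup (Fin 2) F) : Matrix (Fin 2) (Fin 2) F)
      = !![l * s, l * s⁻¹; s * l⁻¹, 0] ^ 2 := by
    simp [hu, hr, hx, sq, CharTwo.neg_eq]
    refine ⟨⟨?_, ?_⟩, ?_, ?_⟩ <;> field_simp
    ring
  set B := (u * (r⁻¹ * u * r)) ^ (k + 1) * ((r⁻¹ * u * r) * x) ^ (k + 1)
  have hB : (B : Matrix (Fin 2) (Fin 2) F) = !![s, 0; 0, s⁻¹] := by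
    rw [Matrix.SpecialLinearGroup.coe_mul, Matrix.SpecialLinearGroup.coe_pow,
      Matrix.SpecialLinearGroup.coe_pow, hN, hP,
      sq_pow_eq_self_of_trace_ne_zero hq (by simpa [trace_fin_two]),
      sq_pow_eq_self_of_trace_ne_zero hq (by simp [trace_fin_two, hl, hs0]), mul_fin_two]
    simp [hl, mul_left_comm l, CharTwo.add_self_eq_zero]
  refine ⟨?_, 0, hB⟩
  rw [mul_assoc, inv_mul_eq_iff_eq_mul]
  ext i j
  fin_cases i <;> fin_cases j <;> simp [hB, hu, hx]
  field_simp

/-- For `u = !![1,0;1,1]`, `r = !![0,λ;λ⁻¹,0]`, `x = !![1,0;t,1]` with `t ≠ 0`, and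
`q² - 1 = 2k + 1`, the element `b(x) = (u·uʳ)^(k+1)·(uʳ·x)^(k+1)` conjugates `u` to `x`
and is congruent mod the lower unitriangular subgroup to `diag(s, s⁻¹)` where `s² = t`. -/
theorem stmt_12 {F : Type*} [Field F] [Fintype F] (e : ℕ) (he : 0 < e)
    (hF : Fintype.card F = 2 ^ e) (hq : 2 < Fintype.card F)
    (k : ℕ) (hk : 2 * k + 1 = Fintype.card F ^ 2 - 1)
    (l t s : F) (hl : l ≠ 0) (ht : t ≠ 0) (hs : s ^ 2 = t)
    (u r x : Matrix.SpecialLinearGroup (Fin 2) F)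
    (hu : (u : Matrix (Fin 2) (Fin 2) F) = !![1, 0; 1, 1])
    (hr : (r : Matrix (Fin 2) (Fin 2) F) = !![0, l; l⁻¹, 0])
    (hx : (x : Matrix (Fin 2) (Fin 2) F) = !![1, 0; t, 1]) :
    ((u * (r⁻¹ * u * r)) ^ (k + 1) * ((r⁻¹ * u * r) * x) ^ (k + 1))⁻¹ * u *
        ((u * (r⁻¹ * u * r)) ^ (k + 1) * ((r⁻¹ * u * r) * x) ^ (k + 1)) = x ∧
      ∃ w : F,
        (((u * (r⁻¹ * u * r)) ^ (k + 1) * ((r⁻¹ * u * r) * x) ^ (k + 1) :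
            Matrix.SpecialLinearGroup (Fin 2) F) : Matrix (Fin 2) (Fin 2) F) =
          !![s, 0; w, s⁻¹] :=
  stmt_12_general e hF k hk l t s hl ht hs u r x hu hr hx
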